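/- Let p be an odd prime, q = p^m, f a quadratic form on F_{q^{s₁}} of even rank R and sign ε_f, with associated linearized polynomial L_f satisfying f(x) = Tr_q^{q^{s₁}}(x·L_f(x)) and F(x,y) = Tr_q^{q^{s₁}}(x·L_f(y)). For z ∈ F_q* and b ∈ Im(L_f), with x_b satisfying L_f(x_b) = -b/2: ∑_{x ∈ F_{q^{s₁}}} ζ_p^{Tr_p^q(z·f(x) - Tr_q^{q^{s₁}}(z·b·x))} = ε_f · q^{s₁} · (p*)^{-mR/2} · ζ_p^{-Tr_p^q(z·f(x_b))}. -/

import Mathlib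

/-!
With `ψ = ζ_p ^ Tr_p^q(·)`, the hypothesis `L x_b = -b/2` completes the square:
`z f(x) - Tr(z b x) = z f(x + x_b) - z f(x_b)`, so the sum is `ψ(-z f(x_b))` times the Weil sum
`∑ₓ ψ(z f(x))`. In a diagonalising basis that sum is `q^(s₁-R)` times a product of `R`
one-variable sums `∑ₜ ψ(c t²) = η(c) G`, with `η` the quadratic character and `G` the quadratic
Gauss sum. As `R` is even, `η(z)^R = 1` and `G^R = (η(-1) q)^(R/2) = (p*)^(mR/2)`, and
`q^(s₁-R) (p*)^(mR/2) = q^s₁ (p*)^(-mR/2)` because `(p*)² = p²`.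
-/

open Module

/-- `f` restricted to the subspace `H` (of dimension `r`) is a quadratic form of
rank `R` and sign `ε`. -/
def HasRankSignOn {F E : Type*} [Field F] [Fintype F] [DecidableEq F]
    [AddCommGroup E] [Module F E] (f : QuadraticForm F E) (H : Submodule F E)
    (r R : ℕ) (ε : ℤ) : Prop :=
  ∃ (hRr : R ≤ r) (b : Basis (Fin r) F H) (lam : Fin R → F),
    (∀ i, lam i ≠ 0) ∧
    (∀ x : H, f (x : E) = ∑ i : Fin R, lam i * (b.repr x (Fin.castLE hRr i)) ^ 2) ∧
    ε = quadraticChar F (∏ i, lam i)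

theorem AddChar.map_finset_sum {ι A M : Type*} [AddCommMonoid A] [CommMonoid M]
    (ψ : AddChar A M) (s : Finset ι) (g : ι → A) : ψ (∑ i ∈ s, g i) = ∏ i ∈ s, ψ (g i) := by
  classical
  induction s using Finset.induction_on with
  | empty => simp
  | insert a s ha ih => rw [Finset.sum_insert ha, Finset.prod_insert ha, ψ.map_add_eq_mul, ih]

theorem ringChar_ne_two_of_card_eq_pow {F : Type*} [Field F] [Fintype F] {p m : ℕ} (hp : Odd p)
    (hcard : Fintype.card F = p ^ m) : ringChar F ≠ 2 := by
  rw [Ne, FiniteField.even_card_iff_char_two, hcard, Nat.pow_mod, Nat.odd_iff.mp hp, one_pow]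
  decide

section QuadraticGaussSum

variable {F : Type*} [Field F] [Fintype F] [DecidableEq F] {K : Type*} [CommRing K]

theorem quadraticChar_ringHomComp_sq_eq_one {a : F} (ha : a ≠ 0) :
    (quadraticChar F).ringHomComp (Int.castRingHom K) a ^ 2 = 1 := by
  rw [MulChar.ringHomComp_apply, ← map_pow, quadraticChar_sq_one ha, map_one]

variable [IsDomain K]

theorem sum_addChar_mul_sq (hF : ringChar F ≠ 2) {ψ : AddChar F K} (hψ : ψ.IsPrimitive)
    {a : F} (ha : a ≠ 0) :
    ∑ t : F, ψ (a * t ^ 2) = (quadraticChar F).ringHomComp (Int.castRingHom K) a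
        * gaussSum ((quadraticChar F).ringHomComp (Int.castRingHom K)) ψ := by
  set χ := (quadraticChar F).ringHomComp (Int.castRingHom K)
  -- `y` has `1 + χ y` square roots
  have hfiber : ∑ t : F, ψ (a * t ^ 2) = ∑ y : F, (1 + χ y) * ψ.mulShift a y := by
    rw [← Finset.sum_fiberwise Finset.univ (· ^ 2)]
    refine Finset.sum_congr rfl fun y _ => ?_
    rw [Finset.sum_congr rfl fun t ht => by rw [(Finset.mem_filter.mp ht).2], Finset.sum_const,
      nsmul_eq_mul, AddChar.mulShift_apply, add_comm]
    congr 1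
    have hcard := quadraticChar_card_sqrts hF y
    simp only [χ, MulChar.ringHomComp_apply, eq_intCast]
    convert congrArg (Int.cast : ℤ → K) hcard using 1
    · push_cast
      congr 2
      ext t
      simp
    · push_cast
      ring
  have hχ_sq : χ a * χ a = 1 := by rw [← sq, quadraticChar_ringHomComp_sq_eq_one ha]
  calc ∑ t : F, ψ (a * t ^ 2)
      = ∑ y : F, ψ.mulShift a y + gaussSum χ (ψ.mulShift a) := by
        simp only [hfiber, add_mul, one_mul, Finset.sum_add_distrib, gaussSum]
    _ = χ a * (χ a * gaussSum χ (ψ.mulShift a)) := by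
        rw [AddChar.sum_eq_zero_of_ne_one (hψ ha), zero_add, ← mul_assoc, hχ_sq, one_mul]
    _ = χ a * gaussSum χ ψ := by
        rw [← gaussSum_mulShift χ ψ (Units.mk0 a ha), Units.val_mk0]

theorem sum_addChar_diagonal (hF : ringChar F ≠ 2) {ψ : AddChar F K} (hψ : ψ.IsPrimitive)
    {n k : ℕ} (hkn : k ≤ n) (c : Fin k → F) (hc : ∀ i, c i ≠ 0) :
    ∑ v : Fin n → F, ψ (∑ i, c i * v (Fin.castLE hkn i) ^ 2)
      = (Fintype.card F : K) ^ (n - k)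
        * (quadraticChar F).ringHomComp (Int.castRingHom K) (∏ i, c i)
        * gaussSum ((quadraticChar F).ringHomComp (Int.castRingHom K)) ψ ^ k := by
  obtain ⟨l, rfl⟩ := Nat.exists_eq_add_of_le hkn
  rw [← (Fin.appendEquiv k l).sum_comp, Fintype.sum_prod_type]
  simp only [Fin.appendEquiv_apply, show ∀ i : Fin k, Fin.castLE hkn i = Fin.castAdd l i from
    fun i => rfl, Fin.append_left, Finset.sum_const, Finset.card_univ, Fintype.card_fun,
    Fintype.card_fin, nsmul_eq_mul, Nat.add_sub_cancel_left, Nat.cast_pow, ψ.map_finset_sum]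
  rw [← Finset.mul_sum, ← Fintype.prod_sum (fun i t => ψ (c i * t ^ 2)),
    Finset.prod_congr rfl fun i _ => sum_addChar_mul_sq hF hψ (hc i),
    Finset.prod_mul_distrib, Finset.prod_const, Finset.card_univ, Fintype.card_fin, map_prod,
    mul_assoc]

theorem sum_addChar_mul_quadraticForm (hF : ringChar F ≠ 2) {ψ : AddChar F K}
    (hψ : ψ.IsPrimitive) {E : Type*} [AddCommGroup E] [Module F E] [Fintype E]
    {f : QuadraticForm F E} {R : ℕ} {ε : ℤ} (hf : HasRankSignOn f ⊤ (finrank F E) R ε)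
    {z : F} (hz : z ≠ 0) :
    ∑ x : E, ψ (z * f x)
      = (Fintype.card F : K) ^ (finrank F E - R)
        * (quadraticChar F).ringHomComp (Int.castRingHom K) z ^ R * ε
        * gaussSum ((quadraticChar F).ringHomComp (Int.castRingHom K)) ψ ^ R := by
  obtain ⟨hRn, b, lam, hlam, hdiag, rfl⟩ := hf
  have hcoord : ∀ x : E,
      z * f x = ∑ i, z * lam i * b.equivFun ⟨x, trivial⟩ (Fin.castLE hRn i) ^ 2 := by
    intro x
    simp only [hdiag ⟨x, trivial⟩, Finset.mul_sum, mul_assoc, Basis.equivFun_apply]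
  rw [Fintype.sum_equiv (Submodule.topEquiv.symm.toEquiv.trans b.equivFun.toEquiv) _
      (fun v => ψ (∑ i, z * lam i * v (Fin.castLE hRn i) ^ 2)) fun x => congrArg ψ (hcoord x),
    sum_addChar_diagonal hF hψ hRn _ fun i => mul_ne_zero hz (hlam i), Finset.prod_mul_distrib,
    Finset.prod_const, Finset.card_univ, Fintype.card_fin, map_mul, map_pow]
  simp only [MulChar.ringHomComp_apply, eq_intCast]
  ring

theorem gaussSum_quadraticChar_sq [CharZero K] {p m : ℕ} (hp : Odd p)
    (hcard : Fintype.card F = p ^ m) {ψ : AddChar F K} (hψ : ψ.IsPrimitive) :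
    gaussSum ((quadraticChar F).ringHomComp (Int.castRingHom K)) ψ ^ 2
      = ((-1 : K) ^ ((p - 1) / 2) * p) ^ m := by
  have hF := ringChar_ne_two_of_card_eq_pow hp hcard
  have hp2 : p % 2 = 1 := Nat.odd_iff.mp hp
  rw [gaussSum_sq ((MulChar.ringHomComp_ne_one_iff Int.cast_injective).mpr
      (quadraticChar_ne_one hF)) ((quadraticChar_isQuadratic F).comp _) hψ,
    MulChar.ringHomComp_apply, quadraticChar_neg_one hF, hcard, Nat.cast_pow, map_pow,
    ZMod.χ₄_eq_neg_one_pow hp2, show (p - 1) / 2 = p / 2 by omega, eq_intCast]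
  push_cast
  ring

theorem sum_addChar_mul_quadraticForm_of_even {p m : ℕ} (hp : Odd p)
    (hcard : Fintype.card F = p ^ m) {ψ : AddChar F ℂ} (hψ : ψ.IsPrimitive)
    {E : Type*} [AddCommGroup E] [Module F E] [Fintype E] {f : QuadraticForm F E} {R : ℕ}
    {ε : ℤ} (hf : HasRankSignOn f ⊤ (finrank F E) R ε) (heven : Even R) {z : F} (hz : z ≠ 0) :
    ∑ x : E, ψ (z * f x)
      = ε * (Fintype.card F : ℂ) ^ finrank F E
        * ((-1 : ℂ) ^ ((p - 1) / 2) * p) ^ (-((m * R / 2 : ℕ) : ℤ)) := by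
  have hRn : R ≤ finrank F E := hf.fst
  obtain ⟨r, rfl⟩ := heven
  rw [← two_mul] at hRn
  rw [sum_addChar_mul_quadraticForm (ringChar_ne_two_of_card_eq_pow hp hcard) hψ hf hz,
    ← two_mul, pow_mul _ 2 r, pow_mul _ 2 r, gaussSum_quadraticChar_sq hp hcard hψ]
  have hmr : m * (2 * r) / 2 = m * r := by
    rw [Nat.mul_left_comm, Nat.mul_div_cancel_left _ two_pos]
  set P : ℂ := (-1) ^ ((p - 1) / 2) * p
  have hP : P ^ 2 = (p : ℂ) ^ 2 := by
    rw [mul_pow, ← pow_mul, mul_comm _ 2, pow_mul, neg_one_sq, one_pow, one_mul]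
  have hP0 : P ^ (m * r) ≠ 0 := pow_ne_zero _ (by simp [P, hp.pos.ne'])
  rw [quadraticChar_ringHomComp_sq_eq_one hz, one_pow, mul_one, hmr, zpow_neg, zpow_natCast,
    ← pow_mul, hcard, Nat.cast_pow, eq_mul_inv_iff_mul_eq₀ hP0]
  calc ((p : ℂ) ^ m) ^ (finrank F E - 2 * r) * ε * P ^ (m * r) * P ^ (m * r)
      = ε * (((p : ℂ) ^ m) ^ (finrank F E - 2 * r) * ((p : ℂ) ^ m) ^ (2 * r)) := by
        rw [mul_assoc, ← pow_add, ← two_mul, pow_mul, hP, ← pow_mul, ← pow_mul, ← pow_mul]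
        ring
    _ = ε * ((p : ℂ) ^ m) ^ finrank F E := by rw [pow_sub_mul_pow _ hRn]

end QuadraticGaussSum

theorem mul_sub_trace_eq_of_apply_eq_neg_half {F E : Type*} [Field F] [Field E] [Algebra F E]
    {f : E → F} {L : E →ₗ[F] E} (hfL : ∀ x, f x = Algebra.trace F E (x * L x))
    (hsym : ∀ x y, Algebra.trace F E (x * L y) = Algebra.trace F E (y * L x))
    (h2 : (2 : E) ≠ 0) {b xb : E} (hxb : L xb = -(b / 2)) (z : F) (x : E) :
    z * f x - Algebra.trace F E (algebraMap F E z * b * x) = z * f (x + xb) - z * f xb := by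
  have hb : b = -(2 * L xb) := by rw [hxb]; field_simp
  have hz : algebraMap F E z * b * x = z • (-(2 : F) • (x * L xb)) := by
    rw [hb, Algebra.smul_def, Algebra.smul_def]; simp only [map_neg, map_ofNat]; ring
  have hadd : f (x + xb) = f x + f xb + 2 * Algebra.trace F E (x * L xb) := by
    rw [hfL, hfL, hfL, map_add, add_mul, mul_add, mul_add, map_add, map_add, map_add,
      hsym xb x]
    ring
  rw [hz, map_smul, map_smul, smul_eq_mul, smul_eq_mul, hadd]
  ring

section TraceAddChar

variable (p : ℕ) [Fact p.Prime] (F : Type*) [Field F] [Algebra (ZMod p) F]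

noncomputable def traceAddChar : AddChar F ℂ :=
  (AddChar.zmodChar p (Complex.isPrimitiveRoot_exp p (NeZero.ne p)).pow_eq_one).compAddMonoidHom
    (Algebra.trace (ZMod p) F).toAddMonoidHom

theorem traceAddChar_apply (w : F) :
    traceAddChar p F w
      = Complex.exp (2 * Real.pi * Complex.I / p) ^ (Algebra.trace (ZMod p) F w).val :=
  rfl

theorem traceAddChar_isPrimitive [Finite F] : (traceAddChar p F).IsPrimitive := by
  refine AddChar.IsPrimitive.of_ne_one (AddChar.ne_one_iff.mpr ?_)
  obtain ⟨a, ha⟩ := Algebra.trace_surjective (ZMod p) F 1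
  refine ⟨a, ?_⟩
  rw [traceAddChar_apply, ha, ZMod.val_one, pow_one]
  exact (Complex.isPrimitiveRoot_exp p (NeZero.ne p)).ne_one (Fact.out : p.Prime).one_lt

end TraceAddChar

theorem stmt_15_general (p : ℕ) [Fact p.Prime] (hp : p ≠ 2) (m : ℕ) (F : Type*)
    [Field F] [Fintype F] [DecidableEq F] [Algebra (ZMod p) F]
    (hcard : Fintype.card F = p ^ m)
    (E₁ : Type*) [Field E₁] [Fintype E₁] [Algebra F E₁]
    (f : QuadraticForm F E₁) (L : E₁ →ₗ[F] E₁)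
    (hfL : ∀ x : E₁, f x = Algebra.trace F E₁ (x * L x))
    (hsym : ∀ x y : E₁, Algebra.trace F E₁ (x * L y) = Algebra.trace F E₁ (y * L x))
    (R : ℕ) (ε : ℤ) (hf : HasRankSignOn f ⊤ (finrank F E₁) R ε) (heven : Even R)
    (z : F) (hz : z ≠ 0) (b : E₁)
    (xb : E₁) (hxb : L xb = -(b / 2)) :
    ∑ x : E₁, Complex.exp (2 * Real.pi * Complex.I / p)
        ^ (Algebra.trace (ZMod p) F
            (z * f x - Algebra.trace F E₁ (algebraMap F E₁ z * b * x))).val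
      = (ε : ℂ) * (Fintype.card F : ℂ) ^ finrank F E₁
          * ((-1 : ℂ) ^ ((p - 1) / 2) * (p : ℂ)) ^ (-((m * R / 2 : ℕ) : ℤ))
          * Complex.exp (2 * Real.pi * Complex.I / p)
              ^ (-(((Algebra.trace (ZMod p) F (z * f xb)).val : ℤ))) := by
  have hp_odd : Odd p := (Fact.out : p.Prime).odd_of_ne_two hp
  have h2 : (2 : E₁) ≠ 0 := by
    have := (algebraMap F E₁).injective.ne
      (Ring.two_ne_zero (ringChar_ne_two_of_card_eq_pow hp_odd hcard))
    rwa [map_ofNat, map_zero] at this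
  set ψ := traceAddChar p F
  calc _ = ∑ x : E₁, ψ (z * f (x + xb)) * ψ (-(z * f xb)) := by
        refine Finset.sum_congr rfl fun x _ => ?_
        rw [← traceAddChar_apply, mul_sub_trace_eq_of_apply_eq_neg_half hfL hsym h2 hxb,
          sub_eq_add_neg, AddChar.map_add_eq_mul]
    _ = (∑ x : E₁, ψ (z * f x)) * ψ (-(z * f xb)) := by
        rw [← Finset.sum_mul, Fintype.sum_equiv (Equiv.addRight xb) (fun x => ψ (z * f (x + xb)))
          (fun x => ψ (z * f x)) fun _ => rfl]
    _ = _ := by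
        rw [sum_addChar_mul_quadraticForm_of_even hp_odd hcard (traceAddChar_isPrimitive p F) hf
          heven hz, AddChar.map_neg_eq_inv, traceAddChar_apply, zpow_neg (Complex.exp _),
          zpow_natCast]

/-- For a quadratic form `f` of even rank `R` and sign `ε_f` on
`F_{q^{s₁}}` with linearized polynomial `L_f` (so `f(x) = Tr(x L_f(x))` and the
polar form is `Tr(x L_f(y))`), `z ∈ F_q*`, `b ∈ Im(L_f)` and `L_f(x_b) = -b/2`:
`∑_x ζ_p^{Tr_p^q(z f(x) - Tr(z b x))} = ε_f q^{s₁} (p*)^{-mR/2} ζ_p^{-Tr_p^q(z f(x_b))}`. -/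
theorem stmt_15 (p : ℕ) [Fact p.Prime] (hp : p ≠ 2) (m : ℕ) (F : Type*)
    [Field F] [Fintype F] [DecidableEq F] [Algebra (ZMod p) F]
    (hcard : Fintype.card F = p ^ m)
    (E₁ : Type*) [Field E₁] [Fintype E₁] [Algebra F E₁]
    (f : QuadraticForm F E₁) (L : E₁ →ₗ[F] E₁)
    (hfL : ∀ x : E₁, f x = Algebra.trace F E₁ (x * L x))
    (hsym : ∀ x y : E₁, Algebra.trace F E₁ (x * L y) = Algebra.trace F E₁ (y * L x))
    (R : ℕ) (ε : ℤ) (hf : HasRankSignOn f ⊤ (finrank F E₁) R ε) (heven : Even R)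
    (z : F) (hz : z ≠ 0) (b : E₁) (hb : b ∈ LinearMap.range L)
    (xb : E₁) (hxb : L xb = -(b / 2)) :
    ∑ x : E₁, Complex.exp (2 * Real.pi * Complex.I / p)
        ^ (Algebra.trace (ZMod p) F
            (z * f x - Algebra.trace F E₁ (algebraMap F E₁ z * b * x))).val
      = (ε : ℂ) * (Fintype.card F : ℂ) ^ finrank F E₁
          * ((-1 : ℂ) ^ ((p - 1) / 2) * (p : ℂ)) ^ (-((m * R / 2 : ℕ) : ℤ))
          * Complex.exp (2 * Real.pi * Complex.I / p)
              ^ (-(((Algebra.trace (ZMod p) F (z * f xb)).val : ℤ))) :=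
  stmt_15_general p hp m F hcard E₁ f L hfL hsym R ε hf heven z hz b xb hxb
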